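/- Let K be a field of characteristic zero and let d be a tangential derivation of lie_n (i.e., d(x_k) = [x_k, d_k] for some d_k ∈ lie_n). Then for every w ∈ lie_n, λ(d(w)) = ⁅d⁺, λ(w)⁆ in the Lie algebra of derivations of lie_{n+1}. -/
import Mathlib


open FreeLieAlgebra

variable (K : Type) [Field K] [CharZero K]

/-- `lieF K n` is the free Lie algebra over `K` on `x_1, …, x_n` (indexed by `Fin n`);
`lieF K (n+1)` is the free Lie algebra on `x_0, x_1, …, x_n`, where the generator `x_0`
is indexed by `0 : Fin (n+1)` and `x_k` (for `1 ≤ k ≤ n`) by `k.succ` with `k : Fin n`. -/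
abbrev lieF (N : ℕ) : Type := FreeLieAlgebra K (Fin N)

/-- The Lie algebra of derivations of `lieF K N`. -/
abbrev DerL (N : ℕ) : Type := LieDerivation K (lieF K N) (lieF K N)

/-- The Lie algebra embedding `s : lie_n → lie_{n+1}`, `x_k ↦ x_k` for `1 ≤ k ≤ n`. -/
noncomputable def sMap (n : ℕ) : lieF K n →ₗ⁅K⁆ lieF K (n + 1) :=
  FreeLieAlgebra.lift K fun k : Fin n => FreeLieAlgebra.of K k.succ

/-- The generator `x_0` of `lie_{n+1}`. -/
noncomputable def x0 (n : ℕ) : lieF K (n + 1) := FreeLieAlgebra.of K (0 : Fin (n + 1))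

/-- A Lie subalgebra of a free Lie algebra containing all generators is everything. -/
lemma mem_of_forall_of {N : ℕ} (S : LieSubalgebra K (lieF K N))
    (h : ∀ i : Fin N, FreeLieAlgebra.of K i ∈ S) (x : lieF K N) : x ∈ S := by
  let ψ : lieF K N →ₗ⁅K⁆ S := FreeLieAlgebra.lift K fun i => (⟨FreeLieAlgebra.of K i, h i⟩ : S)
  have key : S.incl.comp ψ = (FreeLieAlgebra.lift K fun i => FreeLieAlgebra.of K i) := by
    apply FreeLieAlgebra.hom_ext
    intro i
    simp [ψ]
  have key2 : (FreeLieAlgebra.lift K fun i : Fin N => FreeLieAlgebra.of K i) =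
      (LieHom.id : lieF K N →ₗ⁅K⁆ lieF K N) := by
    apply FreeLieAlgebra.hom_ext
    intro i
    simp
  have : (S.incl.comp ψ) x = x := by rw [key, key2]; rfl
  have hx : ((ψ x : S) : lieF K N) = x := this
  rw [← hx]
  exact (ψ x).2

/-- The kernel of a Lie derivation, as a Lie subalgebra. -/
def kerSub {N : ℕ} (D : DerL K N) : LieSubalgebra K (lieF K N) where
  carrier := {x | D x = 0}
  add_mem' := by intro a b ha hb; simp only [Set.mem_setOf_eq, map_add] at *; rw [ha, hb, add_zero]
  zero_mem' := by simp
  smul_mem' := by intro c a ha; simp only [Set.mem_setOf_eq, map_smul] at *; rw [ha, smul_zero]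
  lie_mem' := by
    intro a b ha hb
    simp only [Set.mem_setOf_eq] at *
    rw [LieDerivation.apply_lie_eq_add, ha, hb, zero_lie, lie_zero, add_zero]

lemma derivation_ext {N : ℕ} (D E : DerL K N)
    (h : ∀ i : Fin N, D (FreeLieAlgebra.of K i) = E (FreeLieAlgebra.of K i)) : D = E := by
  ext x
  have hx := mem_of_forall_of K (kerSub K (D - E)) (fun i => by
    show (D - E) (FreeLieAlgebra.of K i) = 0
    rw [LieDerivation.sub_apply, h i, sub_self]) x
  have : (D - E) x = 0 := hx
  rw [LieDerivation.sub_apply] at this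
  exact sub_eq_zero.mp this

lemma derivation_zero_of_of {N : ℕ} (D : DerL K N)
    (h : ∀ i : Fin N, D (FreeLieAlgebra.of K i) = 0) (x : lieF K N) : D x = 0 :=
  mem_of_forall_of K (kerSub K D) h x

theorem lambda_intertwines_tangential (n : ℕ)
    (lam : lieF K n → DerL K (n + 1))
    (hlam0 : ∀ a : lieF K n, lam a (x0 K n) = ⁅x0 K n, sMap K n a⁆)
    (hlam : ∀ a : lieF K n, ∀ k : Fin n, lam a (FreeLieAlgebra.of K k.succ) = 0)
    (d : DerL K n) (dt : Fin n → lieF K n)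
    (hd : ∀ k : Fin n, d (FreeLieAlgebra.of K k) = ⁅FreeLieAlgebra.of K k, dt k⁆)
    (dp : DerL K (n + 1))
    (hdp0 : dp (x0 K n) = 0)
    (hdps : ∀ w : lieF K n, dp (sMap K n w) = sMap K n (d w)) :
    ∀ w : lieF K n, lam (d w) = ⁅dp, lam w⁆ := by
  -- lam a vanishes on range of sMap
  have hvan : ∀ a u : lieF K n, lam a (sMap K n u) = 0 := by
    intro a u
    have : sMap K n u ∈ kerSub K (lam a) := by
      refine mem_of_forall_of K ((kerSub K (lam a)).comap (sMap K n)) ?_ u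
      intro k
      show lam a (sMap K n (FreeLieAlgebra.of K k)) = 0
      have : sMap K n (FreeLieAlgebra.of K k) = FreeLieAlgebra.of K k.succ := by
        simp [sMap]
      rw [this]; exact hlam a k
    exact this
  intro w
  apply derivation_ext
  intro i
  rcases Fin.eq_zero_or_eq_succ i with hi | ⟨k, hk⟩
  · subst hi
    have h0 : FreeLieAlgebra.of K (0 : Fin (n+1)) = x0 K n := rfl
    rw [h0, hlam0, LieDerivation.commutator_apply, hlam0, hdp0, map_zero, sub_zero,
      LieDerivation.apply_lie_eq_add, hdp0, zero_lie, add_zero, hdps]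
  · subst hk
    rw [hlam (d w) k, LieDerivation.commutator_apply, hlam w k, map_zero]
    have hofs : FreeLieAlgebra.of K k.succ = sMap K n (FreeLieAlgebra.of K k) := by
      simp [sMap]
    rw [hofs, hdps, hvan, zero_sub, neg_zero]
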